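/- Special case (a = 2n+1, b = n) of MacMahon's identity: for every natural number n ≥ 1, the determinant of the n×n matrix with entries C(2n+1+i, n+j), 1 ≤ i,j ≤ n, equals (3n+1)!!·(n-1)!!·n!!·n!! / ( (2n+1)!!·(2n)!!·(2n)!! ), where m!! = 1!·2!·⋯·m! is the superfactorial. -/

import Mathlib

/-!
Since `C(b+c+i, b+j) = (b+c+i)! / ((c+i)! (b+j)!) * (c+i)(c+i-1)⋯(c+i-j+1)`,
pulling `(b + c + i)! / (c + i)!` out of row `i` and `1 / (b + j)!` out of column `j` leaves
the matrix of values at the nodes `c + i` of the monic polynomials `x(x - 1)⋯(x - j + 1)`.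
Its determinant is the Vandermonde determinant of `c, c + 1, …, c + n - 1`, i.e. `∏_{k<n} k!`.
With `b = c = n + 1` the remaining products of factorials are quotients of superfactorials.
-/

def superfactorial (m : ℕ) : ℕ := ∏ k ∈ Finset.range m, Nat.factorial (k + 1)

open Finset Matrix Nat

theorem superfactorial_eq_superFactorial (m : ℕ) : superfactorial m = m.superFactorial :=
  prod_range_factorial_succ m

theorem Nat.superFactorial_add (a b : ℕ) :
    (a + b).superFactorial = a.superFactorial * ∏ k ∈ range b, (a + k + 1)! := by
  rw [← prod_range_factorial_succ, ← prod_range_factorial_succ, prod_range_add]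

theorem Nat.superFactorial_pos (m : ℕ) : 0 < m.superFactorial :=
  prod_range_factorial_succ m ▸ prod_pos fun _ _ => factorial_pos _

theorem Nat.add_choose_add_mul_factorial_mul_factorial (b m j : ℕ) :
    (b + m).choose (b + j) * (b + j)! * m ! = (b + m)! * m.descFactorial j := by
  rcases le_or_gt j m with hjm | hmj
  · rw [← factorial_mul_descFactorial hjm, ← mul_assoc,
      show m - j = b + m - (b + j) by omega,
      choose_mul_factorial_mul_factorial (by omega)]
  · rw [choose_eq_zero_of_lt (by omega), descFactorial_eq_zero_iff_lt.mpr hmj]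
    simp

theorem Matrix.det_descFactorial_add {R : Type*} [CommRing R] [IsDomain R] (c n : ℕ) :
    det (of fun i j : Fin n => (((c + i).descFactorial j : ℕ) : R)) = (n - 1).superFactorial := by
  rcases n with _ | n
  · simp
  rw [add_tsub_cancel_right, ← det_vandermonde_id_eq_superFactorial,
    ← det_vandermonde_add _ (c : R),
    det_eval_matrixOfPolynomials_eq_det_vandermonde _ (fun j => descPochhammer R j)
      (fun j => descPochhammer_natDegree R j) (fun j => monic_descPochhammer R j)]
  simp [add_comm, ← descPochhammer_eval_eq_descFactorial]

theorem Matrix.det_choose_add_add {K : Type*} [Field K] [CharZero K] (b c n : ℕ) :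
    det (of fun i j : Fin n => ((b + c + i).choose (b + j) : K)) =
      (n - 1).superFactorial * ∏ i : Fin n, ((b + c + i)! / ((b + i)! * (c + i)!) : K) := by
  have hentry : (of fun i j : Fin n => ((b + c + i).choose (b + j) : K)) =
      of fun i j : Fin n => ((b + c + i)! / (c + i)! : K) *
        of (fun i j : Fin n => (((b + j)! : K))⁻¹ *
          of (fun i j : Fin n => (((c + i).descFactorial j : ℕ) : K)) i j) i j := by
    ext i j
    have h := congrArg (Nat.cast : ℕ → K)
      (add_choose_add_mul_factorial_mul_factorial b (c + i) j)
    push_cast [← add_assoc] at h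
    have hb : ((b + j : ℕ)! : K) ≠ 0 := Nat.cast_ne_zero.mpr (factorial_ne_zero _)
    have hc : ((c + i : ℕ)! : K) ≠ 0 := Nat.cast_ne_zero.mpr (factorial_ne_zero _)
    simp only [of_apply]
    field_simp
    linear_combination h
  rw [hentry, det_mul_column, det_mul_row, det_descFactorial_add, ← mul_assoc,
    ← prod_mul_distrib, mul_comm]
  congr 1
  refine prod_congr rfl fun i _ => ?_
  ring

theorem macmahon_special_case_general (n : ℕ) :
    Matrix.det (fun i j : Fin n =>
        ((Nat.choose (2 * n + 1 + i + 1) (n + j + 1) : ℕ) : ℚ)) =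
      ((superfactorial (3 * n + 1) * superfactorial (n - 1) *
          superfactorial n * superfactorial n : ℕ) : ℚ) /
        ((superfactorial (2 * n + 1) * superfactorial (2 * n) *
          superfactorial (2 * n) : ℕ) : ℚ) := by
  have hshape : (fun i j : Fin n => ((Nat.choose (2 * n + 1 + i + 1) (n + j + 1) : ℕ) : ℚ)) =
      of fun i j : Fin n => (((n + 1) + (n + 1) + i).choose ((n + 1) + j) : ℚ) := by
    ext i j
    simp only [of_apply]
    congr 2 <;> ring
  rw [hshape, det_choose_add_add, Fin.prod_univ_eq_prod_range
    (fun i : ℕ => (((n + 1 + (n + 1) + i)! / ((n + 1 + i)! * (n + 1 + i)!) : ℚ)))]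
  have h3 : (3 * n + 1).superFactorial =
      (2 * n + 1).superFactorial * ∏ k ∈ range n, (n + 1 + (n + 1) + k)! := by
    rw [show 3 * n + 1 = 2 * n + 1 + n by ring, superFactorial_add]
    exact congrArg _ (prod_congr rfl fun k _ => by ring_nf)
  have h2 : (2 * n).superFactorial = n.superFactorial * ∏ k ∈ range n, (n + 1 + k)! := by
    rw [two_mul, superFactorial_add]
    exact congrArg _ (prod_congr rfl fun k _ => by ring_nf)
  simp only [superfactorial_eq_superFactorial, h3, h2]
  rw [prod_div_distrib, prod_mul_distrib]
  have hsf : ∀ m : ℕ, (m.superFactorial : ℚ) ≠ 0 := fun m =>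
    Nat.cast_ne_zero.mpr (superFactorial_pos m).ne'
  push_cast
  field_simp [hsf]

theorem macmahon_special_case (n : ℕ) (hn : 1 ≤ n) :
    Matrix.det (fun i j : Fin n =>
        ((Nat.choose (2 * n + 1 + i + 1) (n + j + 1) : ℕ) : ℚ)) =
      ((superfactorial (3 * n + 1) * superfactorial (n - 1) *
          superfactorial n * superfactorial n : ℕ) : ℚ) /
        ((superfactorial (2 * n + 1) * superfactorial (2 * n) *
          superfactorial (2 * n) : ℕ) : ℚ) :=
  macmahon_special_case_general n
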